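/- Fix a₀ ∈ ℝ and define ψ(t) = √((2+a₀²)t² + 2a₀t + 1), V(t,x) = (ψ'(t)/ψ(t))·x, ρ(t,x) = ψ(t)³/(ψ(t)² + x²)², p(t,x) = 1/(ψ(t)(ψ(t)² + x²)). Then for every t ∈ ℝ the kinetic energy is E_k(t) = (1/2)∫_ℝ ρ(t,x)V(t,x)² dx = π ψ'(t)²/4, the potential energy is E_p(t) = (1/2)∫_ℝ p(t,x) dx = π/(2ψ(t)²), and the total energy is constant: E_k(t) + E_p(t) = (π/4)(2 + a₀²) for all t. -/

import Mathlib

open MeasureTheory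

/-- The time factor of the paper's explicit globally smooth 1D solution (γ = 3):
`ψ(t) = √((2+a₀²)t² + 2a₀t + 1)`. -/
noncomputable def psi (a₀ t : ℝ) : ℝ :=
  Real.sqrt ((2 + a₀ ^ 2) * t ^ 2 + 2 * a₀ * t + 1)

/-!
Scaling `x = c u` reduces both energies to `∫ (1 + u²)⁻¹ = π` and `∫ u² / (1 + u²)² = π / 2`, the
latter from the antiderivative `(arctan u - u / (1 + u²)) / 2`. Conservation of the total energy is
the identity `ψ'² + 2 / ψ² = 2 + a₀²`: since `ψ ψ' = (2 + a₀²) t + a₀`, it reduces to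
`((2 + a₀²) t + a₀)² + 2 = (2 + a₀²) ψ²`.
-/

open Real Filter Topology

lemma tendsto_div_one_add_sq_cocompact :
    Tendsto (fun u : ℝ => u / (1 + u ^ 2)) (cocompact ℝ) (𝓝 0) := by
  refine squeeze_zero_norm (fun u => ?_) tendsto_norm_cocompact_atTop.inv_tendsto_atTop
  rcases eq_or_ne u 0 with rfl | hu
  · simp
  have h : (0:ℝ) < 1 + u ^ 2 := by positivity
  rw [Pi.inv_apply, norm_div, Real.norm_eq_abs, Real.norm_eq_abs, abs_of_pos h, div_le_iff₀ h,
    ← one_div, div_mul_eq_mul_div, le_div_iff₀ (abs_pos.mpr hu)]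
  nlinarith [sq_abs u]

lemma hasDerivAt_arctan_sub_div_one_add_sq (u : ℝ) :
    HasDerivAt (fun u : ℝ => (arctan u - u / (1 + u ^ 2)) / 2) (u ^ 2 / (1 + u ^ 2) ^ 2) u := by
  have h : 1 + u ^ 2 ≠ 0 := by positivity
  have hq : HasDerivAt (fun u : ℝ => 1 + u ^ 2) (2 * u) u := by
    simpa using (hasDerivAt_pow 2 u).const_add 1
  refine (((hasDerivAt_arctan u).sub ((hasDerivAt_id u).div hq h)).div_const 2).congr_deriv ?_
  simp only [id]
  field_simp
  ring

lemma integrable_sq_div_one_add_sq_sq : Integrable (fun u : ℝ => u ^ 2 / (1 + u ^ 2) ^ 2) := by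
  have hcont : Continuous fun u : ℝ => u ^ 2 / (1 + u ^ 2) ^ 2 := by
    fun_prop (disch := intro; positivity)
  refine integrable_inv_one_add_sq.mono' hcont.aestronglyMeasurable (.of_forall fun u => ?_)
  have h : 0 < 1 + u ^ 2 := by positivity
  rw [Real.norm_of_nonneg (by positivity), div_le_iff₀ (by positivity), sq (1 + u ^ 2),
    inv_mul_cancel_left₀ h.ne']
  linarith

lemma integral_sq_div_one_add_sq_sq : ∫ u : ℝ, u ^ 2 / (1 + u ^ 2) ^ 2 = π / 2 := by
  have hF (l : Filter ℝ) (hl : l ≤ cocompact ℝ) (θ : ℝ) (hθ : Tendsto arctan l (𝓝 θ)) :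
      Tendsto (fun u : ℝ => (arctan u - u / (1 + u ^ 2)) / 2) l (𝓝 (θ / 2)) := by
    simpa using (hθ.sub (tendsto_div_one_add_sq_cocompact.mono_left hl)).div_const 2
  rw [integral_of_hasDerivAt_of_tendsto hasDerivAt_arctan_sub_div_one_add_sq
    integrable_sq_div_one_add_sq_sq
    (hF _ atBot_le_cocompact _ (tendsto_nhds_of_tendsto_nhdsWithin tendsto_arctan_atBot))
    (hF _ atTop_le_cocompact _ (tendsto_nhds_of_tendsto_nhdsWithin tendsto_arctan_atTop))]
  ring

lemma integral_inv_sq_mul_comp_div (g : ℝ → ℝ) {c : ℝ} (hc : 0 < c) :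
    ∫ x : ℝ, (c ^ 2)⁻¹ * g (x / c) = (∫ u : ℝ, g u) / c := by
  rw [integral_const_mul, Measure.integral_comp_div g c, abs_of_pos hc, smul_eq_mul]
  field_simp

lemma integral_one_div_sq_add_sq {c : ℝ} (hc : 0 < c) :
    ∫ x : ℝ, 1 / (c ^ 2 + x ^ 2) = π / c := by
  rw [← integral_univ_inv_one_add_sq, ← integral_inv_sq_mul_comp_div _ hc]
  congr 1 with x
  field_simp

lemma integral_sq_div_sq_add_sq_sq {c : ℝ} (hc : 0 < c) :
    ∫ x : ℝ, x ^ 2 / (c ^ 2 + x ^ 2) ^ 2 = π / (2 * c) := by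
  rw [div_mul_eq_div_div, ← integral_sq_div_one_add_sq_sq,
    ← integral_inv_sq_mul_comp_div _ hc]
  congr 1 with x
  field_simp

lemma half_integral_density_mul_velocity_sq {c : ℝ} (hc : 0 < c) (d : ℝ) :
    (1 / 2) * ∫ x : ℝ, (c ^ 3 / (c ^ 2 + x ^ 2) ^ 2) * ((d / c) * x) ^ 2 = π * d ^ 2 / 4 := by
  have hρV (x : ℝ) : (c ^ 3 / (c ^ 2 + x ^ 2) ^ 2) * ((d / c) * x) ^ 2
      = c * d ^ 2 * (x ^ 2 / (c ^ 2 + x ^ 2) ^ 2) := by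
    field_simp
  simp_rw [hρV, integral_const_mul, integral_sq_div_sq_add_sq_sq hc]
  field_simp
  ring

lemma half_integral_pressure {c : ℝ} (hc : 0 < c) :
    (1 / 2) * ∫ x : ℝ, 1 / (c * (c ^ 2 + x ^ 2)) = π / (2 * c ^ 2) := by
  have hp (x : ℝ) : 1 / (c * (c ^ 2 + x ^ 2)) = c⁻¹ * (1 / (c ^ 2 + x ^ 2)) := by
    rw [one_div, mul_inv, one_div]
  simp_rw [hp, integral_const_mul, integral_one_div_sq_add_sq hc]
  field_simp

section psi

variable (a₀ t : ℝ)

lemma psi_sq : psi a₀ t ^ 2 = (2 + a₀ ^ 2) * t ^ 2 + 2 * a₀ * t + 1 := by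
  refine Real.sq_sqrt ?_
  nlinarith [sq_nonneg t, sq_nonneg (a₀ * t + 1)]

lemma psi_pos : 0 < psi a₀ t := by
  refine Real.sqrt_pos.mpr ?_
  by_cases ht : t = 0
  · simp [ht]
  · nlinarith [sq_pos_of_ne_zero ht, sq_nonneg (a₀ * t + 1)]

lemma hasDerivAt_psi : HasDerivAt (psi a₀) (((2 + a₀ ^ 2) * t + a₀) / psi a₀ t) t := by
  have hQ : HasDerivAt (fun s : ℝ => (2 + a₀ ^ 2) * s ^ 2 + 2 * a₀ * s + 1)
      (2 * ((2 + a₀ ^ 2) * t + a₀)) t := by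
    refine ((((hasDerivAt_pow 2 t).const_mul (2 + a₀ ^ 2)).add
      ((hasDerivAt_id t).const_mul (2 * a₀))).add_const 1).congr_deriv ?_
    push_cast
    ring
  exact (hQ.sqrt (psi_sq a₀ t ▸ pow_pos (psi_pos a₀ t) 2).ne').congr_deriv
    (mul_div_mul_left _ _ two_ne_zero)

lemma deriv_psi_sq_add_two_div_psi_sq :
    deriv (psi a₀) t ^ 2 + 2 / psi a₀ t ^ 2 = 2 + a₀ ^ 2 := by
  have hψ := (psi_pos a₀ t).ne'
  rw [(hasDerivAt_psi a₀ t).deriv]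
  field_simp
  rw [psi_sq]
  ring

end psi

/-- energy decomposition of the explicit solution (16):
`E_k(t) = (1/2)∫ ρV² dx = πψ'(t)²/4`, `E_p(t) = (1/2)∫ p dx = π/(2ψ(t)²)`,
and the total energy is constant: `E_k + E_p = (π/4)(2+a₀²)`. -/
theorem stmt13 (a₀ : ℝ) :
    ∀ t : ℝ,
      ((1 / 2) * ∫ x : ℝ,
          ((psi a₀ t) ^ 3 / ((psi a₀ t) ^ 2 + x ^ 2) ^ 2)
            * ((deriv (psi a₀) t / psi a₀ t) * x) ^ 2)
        = Real.pi * (deriv (psi a₀) t) ^ 2 / 4 ∧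
      ((1 / 2) * ∫ x : ℝ, 1 / (psi a₀ t * ((psi a₀ t) ^ 2 + x ^ 2)))
        = Real.pi / (2 * (psi a₀ t) ^ 2) ∧
      Real.pi * (deriv (psi a₀) t) ^ 2 / 4 + Real.pi / (2 * (psi a₀ t) ^ 2)
        = (Real.pi / 4) * (2 + a₀ ^ 2) := by
  intro t
  refine ⟨half_integral_density_mul_velocity_sq (psi_pos a₀ t) _,
    half_integral_pressure (psi_pos a₀ t), ?_⟩
  rw [← deriv_psi_sq_add_two_div_psi_sq a₀ t]
  ring
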